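/- For every b ∈ ℂ, the subspace h_b = ⟨e_0 + b e_1, e_2, e_3, …, e_12⟩ of f_13 is an ideal of codimension 1, and h_b is a filiform Lie algebra: its lower central series satisfies dim h_b^i = 11 − i for 1 ≤ i ≤ 11. -/

import Mathlib

open scoped BigOperators

/-- Structure constants of the 13-dimensional filiform Lie algebra `f₁₃`:
`f13SC i j k` is the coefficient of `e_k` in `⁅e_i, e_j⁆` for `i < j`
(and `0` otherwise; the full antisymmetric constants are obtained below). -/
noncomputable def f13SC : ℕ → ℕ → ℕ → ℂ
  | 0, j, k => if 1 ≤ j ∧ j ≤ 11 ∧ k = j + 1 then 1 else 0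
  | 1, 2, 4 => 1
  | 1, 3, 5 => 1
  | 1, 4, 6 => 9/10
  | 1, 4, 8 => -1
  | 1, 5, 7 => 4/5
  | 1, 5, 9 => -2
  | 1, 6, 8 => 5/7
  | 1, 6, 10 => -335/126
  | 1, 6, 12 => 22105/15246
  | 1, 7, 9 => 9/14
  | 1, 7, 11 => -125/42
  | 1, 8, 10 => 7/12
  | 1, 8, 12 => -4421/1452
  | 1, 9, 11 => 8/15
  | 1, 10, 12 => 27/55
  | 2, 3, 6 => 1/10
  | 2, 3, 8 => 1
  | 2, 4, 7 => 1/10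
  | 2, 4, 9 => 1
  | 2, 5, 8 => 3/35
  | 2, 5, 10 => 83/126
  | 2, 5, 12 => -22105/15246
  | 2, 6, 9 => 1/14
  | 2, 6, 11 => 20/63
  | 2, 7, 10 => 5/84
  | 2, 7, 12 => 697/10164
  | 2, 8, 11 => 1/20
  | 2, 9, 12 => 7/165
  | 3, 4, 8 => 1/70
  | 3, 4, 10 => 43/126
  | 3, 4, 12 => 22105/15246
  | 3, 5, 9 => 1/70
  | 3, 5, 11 => 43/126
  | 3, 6, 10 => 1/84
  | 3, 6, 12 => 7589/30492
  | 3, 7, 11 => 1/105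
  | 3, 8, 12 => 1/132
  | 4, 5, 10 => 1/420
  | 4, 5, 12 => 313/3388
  | 4, 6, 11 => 1/420
  | 4, 7, 12 => 3/1540
  | 5, 6, 12 => 1/2310
  | _, _, _ => 0

/-- The full (antisymmetrized) structure constants of `f₁₃`. -/
noncomputable def f13C (i j k : Fin 13) : ℂ :=
  f13SC i j k - f13SC j i k

/-!
Write `F_m = ⟨e_m, …, e_12⟩`. The structure constants of `f₁₃` satisfy
`⁅e_i, e_j⁆ ∈ F_{i+j+1}`, so `⁅f₁₃, F_m⁆ ⊆ F_{m+1}` and `⁅f₁₃, f₁₃⁆ ⊆ F_2 ⊆ h_b`; in particular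
`h_b = ⟨e₀ + b e₁⟩ ⊕ F_2` is an ideal and `⁅h_b, h_b⁆ ⊆ F_3`. Conversely
`e_{j+1} = ⁅e₀ + b e₁, e_j⁆ - b ⁅e₁, e_j⁆` with `⁅e₁, e_j⁆ ∈ F_{j+2}`, so a downward induction
on `j` gives `⁅h_b, F_m⁆ = F_{m+1}` for `m ≥ 1`. Hence `h_b^i = F_{i+2}`, of dimension `11 - i`.
-/

open Module Submodule

namespace Module.Basis

variable {R M : Type*} [Ring R] [AddCommGroup M] [Module R M] {N : ℕ} (B : Basis (Fin N) R M)

def tailSpan (m : ℕ) : Submodule R M :=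
  span R (B '' {j | m ≤ (j : ℕ)})

theorem finrank_tailSpan [Nontrivial R] [StrongRankCondition R] (m : ℕ) :
    finrank R (B.tailSpan m) = N - m := by
  rw [tailSpan, Set.image_eq_range]
  refine (finrank_span_eq_card (B.linearIndependent.comp _ Subtype.val_injective)).trans ?_
  have h := Finset.card_filter_add_card_filter_not (s := Finset.univ) fun j : Fin N => (j : ℕ) < m
  simp only [not_lt, Finset.card_univ, Fintype.card_fin, Fin.card_filter_val_lt] at h
  simp only [Set.mem_ofPred_eq, Fintype.card_subtype]
  omega

variable {B} {m : ℕ}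

theorem apply_mem_tailSpan {j : Fin N} (h : m ≤ j) : B j ∈ B.tailSpan m :=
  subset_span ⟨j, h, rfl⟩

theorem tailSpan_le_iff {W : Submodule R M} :
    B.tailSpan m ≤ W ↔ ∀ j : Fin N, m ≤ j → B j ∈ W := by
  rw [tailSpan, span_le, Set.image_subset_iff]
  rfl

theorem tailSpan_antitone : Antitone B.tailSpan := fun _ _ h =>
  span_mono (Set.image_mono fun _ hj => le_trans h hj)

theorem tailSpan_zero : B.tailSpan 0 = ⊤ := by
  simp only [tailSpan, zero_le, Set.ofPred_true, Set.image_univ, B.span_eq]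

theorem sum_smul_mem_tailSpan {c : Fin N → R} (hc : ∀ k : Fin N, k < m → c k = 0) :
    ∑ k, c k • B k ∈ B.tailSpan m := by
  refine sum_mem fun k _ => ?_
  by_cases hk : (k : ℕ) < m
  · simp [hc k hk]
  · exact smul_mem _ _ (apply_mem_tailSpan (not_lt.mp hk))

theorem repr_eq_zero_of_mem_tailSpan {x : M} (hx : x ∈ B.tailSpan m) {j : Fin N} (hj : j < m) :
    B.repr x j = 0 := by
  suffices B.tailSpan m ≤ LinearMap.ker (B.coord j) from this hx
  rw [tailSpan_le_iff]
  intro k hk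
  simp [Finsupp.single_eq_of_ne (show j ≠ k by omega)]

theorem tailSpan_le_of_apply_mem {W : Submodule R M}
    (step : ∀ k : Fin N, m ≤ k → B.tailSpan (k + 1) ≤ W → B k ∈ W) : B.tailSpan m ≤ W := by
  induction h : N - m generalizing m with
  | zero => exact tailSpan_le_iff.mpr fun j hj => absurd j.isLt (by omega)
  | succ d ih =>
    have hsucc : B.tailSpan (m + 1) ≤ W := ih (fun k hk => step k (by omega)) (by omega)
    refine tailSpan_le_iff.mpr fun j hj => ?_
    rcases hj.eq_or_lt with hjm | hjm
    · exact step j hj (hjm ▸ hsucc)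
    · exact hsucc (apply_mem_tailSpan hjm)

theorem finrank_span_add_smul_union {K V : Type*} [DivisionRing K] [AddCommGroup V]
    [Module K V] {n : ℕ} (B : Basis (Fin (n + 2)) K V) (b : K) :
    finrank K (span K ({B 0 + b • B 1} ∪ B '' {j | 2 ≤ (j : ℕ)})) = n + 1 := by
  have : Module.Finite K V := Module.Finite.of_basis B
  have hnot : B 0 + b • B 1 ∉ B.tailSpan 2 := fun h => by
    simpa using B.repr_eq_zero_of_mem_tailSpan h (j := 0) (by simp)
  rw [span_union, sup_comm]
  change finrank K (B.tailSpan 2 ⊔ span K {B 0 + b • B 1} : Submodule K V) = n + 1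
  rw [finrank_sup_span_singleton hnot, B.finrank_tailSpan]
  omega

end Module.Basis

theorem lie_mem_of_mem_span {K L : Type*} [CommRing K] [LieRing L] [LieAlgebra K L]
    {s t : Set L} {P : Submodule K L} (h : ∀ x ∈ s, ∀ y ∈ t, ⁅x, y⁆ ∈ P) {x y : L}
    (hx : x ∈ span K s) (hy : y ∈ span K t) : ⁅x, y⁆ ∈ P := by
  have hle : map₂ (LieAlgebra.ad K L : L →ₗ[K] Module.End K L) (span K s) (span K t) ≤ P := by
    rw [map₂_span_span, span_le]
    rintro _ ⟨x, hx, y, hy, rfl⟩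
    exact h x hx y hy
  exact hle (apply_mem_map₂ _ hx hy)

theorem LieIdeal.map_lowerCentralSeries_zero {K L : Type*} [CommRing K] [LieRing L]
    [LieAlgebra K L] (I : LieIdeal K L) :
    (LieModule.lowerCentralSeries K I I 0).toSubmodule.map (I.incl : I →ₗ[K] L) =
      I.toSubmodule := by
  ext x
  simp only [LieModule.lowerCentralSeries_zero, LieSubmodule.top_toSubmodule, Submodule.map_top,
    LinearMap.mem_range]
  exact ⟨fun ⟨y, hy⟩ => hy ▸ y.2, fun hx => ⟨⟨x, hx⟩, rfl⟩⟩

theorem LieIdeal.map_lowerCentralSeries_succ {K L : Type*} [CommRing K] [LieRing L]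
    [LieAlgebra K L] (I : LieIdeal K L) (k : ℕ) :
    (LieModule.lowerCentralSeries K I I (k + 1)).toSubmodule.map (I.incl : I →ₗ[K] L) =
      map₂ (LieAlgebra.ad K L : L →ₗ[K] Module.End K L) I.toSubmodule
        ((LieModule.lowerCentralSeries K I I k).toSubmodule.map (I.incl : I →ₗ[K] L)) := by
  rw [LieModule.lowerCentralSeries_succ, LieSubmodule.lieIdeal_oper_eq_linear_span', map_span,
    map₂_eq_span_image2]
  congr 1
  ext z
  constructor
  · rintro ⟨_, ⟨x, -, y, hy, rfl⟩, rfl⟩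
    exact ⟨x, x.2, y, ⟨y, hy, rfl⟩, rfl⟩
  · rintro ⟨x, hx, _, ⟨y, hy, rfl⟩, rfl⟩
    exact ⟨_, ⟨⟨x, hx⟩, LieSubmodule.mem_top _, y, hy, rfl⟩, rfl⟩

section Filiform

variable {K L : Type*} [Field K] [LieRing L] [LieAlgebra K L] {n : ℕ}

structure IsFiliformBasis (B : Basis (Fin (n + 2)) K L) : Prop where
  lie_mem_tailSpan : ∀ i j : Fin (n + 2), ⁅B i, B j⁆ ∈ B.tailSpan (i + j + 1)
  lie_zero_castSucc : ∀ j : Fin (n + 1), 1 ≤ (j : ℕ) → ⁅B 0, B j.castSucc⁆ = B j.succ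

namespace IsFiliformBasis

variable {B : Basis (Fin (n + 2)) K L} (hB : IsFiliformBasis B)
include hB

theorem lie_mem_tailSpan_add {a c : ℕ} {x y : L} (hx : x ∈ B.tailSpan a)
    (hy : y ∈ B.tailSpan c) :
    ⁅x, y⁆ ∈ B.tailSpan (a + c + 1) := by
  refine lie_mem_of_mem_span ?_ hx hy
  rintro _ ⟨i, hi, rfl⟩ _ ⟨j, hj, rfl⟩
  exact Basis.tailSpan_antitone (by simp only [Set.mem_ofPred_eq] at hi hj; omega)
    (hB.lie_mem_tailSpan i j)

theorem lie_mem_tailSpan_succ (x : L) {c : ℕ} {y : L} (hy : y ∈ B.tailSpan c) :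
    ⁅x, y⁆ ∈ B.tailSpan (c + 1) := by
  simpa using hB.lie_mem_tailSpan_add (B.tailSpan_zero ▸ mem_top : x ∈ B.tailSpan 0) hy

theorem lie_mem_tailSpan_two (x y : L) : ⁅x, y⁆ ∈ B.tailSpan 2 := by
  refine lie_mem_of_mem_span (s := Set.range B) (t := Set.range B) ?_
    (B.span_eq ▸ mem_top) (B.span_eq ▸ mem_top)
  rintro _ ⟨i, rfl⟩ _ ⟨j, rfl⟩
  by_cases hij : (i : ℕ) + j = 0
  · obtain rfl : i = j := Fin.ext (by omega)
    rw [lie_self]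
    exact zero_mem _
  · exact Basis.tailSpan_antitone (by omega) (hB.lie_mem_tailSpan i j)

def ideal (b : K) : LieIdeal K L where
  toSubmodule := span K ({B 0 + b • B 1} ∪ B '' {j | 2 ≤ (j : ℕ)})
  lie_mem {x y} _ := span_mono Set.subset_union_right (hB.lie_mem_tailSpan_two x y)

theorem toSubmodule_ideal (b : K) :
    (hB.ideal b).toSubmodule = span K ({B 0 + b • B 1} ∪ B '' {j | 2 ≤ (j : ℕ)}) :=
  rfl

theorem tailSpan_two_le_ideal (b : K) : B.tailSpan 2 ≤ (hB.ideal b).toSubmodule :=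
  span_mono Set.subset_union_right

theorem add_smul_mem_ideal (b : K) : B 0 + b • B 1 ∈ hB.ideal b :=
  subset_span (Set.mem_union_left _ rfl)

theorem lie_mem_tailSpan_three_of_mem_ideal {b : K} {x y : L} (hx : x ∈ hB.ideal b)
    (hy : y ∈ hB.ideal b) : ⁅x, y⁆ ∈ B.tailSpan 3 := by
  rw [← LieSubmodule.mem_toSubmodule, toSubmodule_ideal] at hx hy
  refine lie_mem_of_mem_span ?_ hx hy
  rintro x hx _ (rfl | ⟨j, hj, rfl⟩)
  · rcases hx with rfl | ⟨i, hi, rfl⟩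
    · rw [lie_self]
      exact zero_mem _
    · rw [← lie_skew]
      exact neg_mem (hB.lie_mem_tailSpan_succ (c := 2) _ (B.apply_mem_tailSpan hi))
  · exact hB.lie_mem_tailSpan_succ (c := 2) x (B.apply_mem_tailSpan hj)

theorem tailSpan_succ_le {b : K} {m : ℕ} (hm : 1 ≤ m) {W : Submodule K L}
    (hW : ∀ y ∈ B.tailSpan m, ⁅B 0 + b • B 1, y⁆ ∈ W) : B.tailSpan (m + 1) ≤ W := by
  refine Basis.tailSpan_le_of_apply_mem fun k hk hkW => ?_
  obtain ⟨j, rfl⟩ := (Fin.exists_succ_eq (x := k)).mpr (by rintro rfl; simp at hk)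
  have hj : m ≤ (j : ℕ) := by simpa using hk
  have hshift : B j.succ = ⁅B 0 + b • B 1, B j.castSucc⁆ - b • ⁅B 1, B j.castSucc⁆ := by
    rw [add_lie, smul_lie, hB.lie_zero_castSucc j (by omega), add_sub_cancel_right]
  have hhigh : ⁅B 1, B j.castSucc⁆ ∈ B.tailSpan (j.succ + 1) :=
    Basis.tailSpan_antitone (by simp) (hB.lie_mem_tailSpan 1 j.castSucc)
  rw [hshift]
  exact sub_mem (hW _ (B.apply_mem_tailSpan hj)) (smul_mem _ _ (hkW hhigh))

theorem map₂_ad_tailSpan {b : K} {P : Submodule K L} (hP : B 0 + b • B 1 ∈ P) {m : ℕ}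
    (hm : 1 ≤ m) :
    map₂ (LieAlgebra.ad K L : L →ₗ[K] Module.End K L) P (B.tailSpan m) = B.tailSpan (m + 1) :=
  le_antisymm (map₂_le.mpr fun x _ _ hy => hB.lie_mem_tailSpan_succ x hy)
    (hB.tailSpan_succ_le hm fun _ hy => apply_mem_map₂ _ hP hy)

theorem map_lowerCentralSeries_ideal (b : K) (k : ℕ) :
    (LieModule.lowerCentralSeries K (hB.ideal b) (hB.ideal b) (k + 1)).toSubmodule.map
      ((hB.ideal b).incl : hB.ideal b →ₗ[K] L) = B.tailSpan (k + 3) := by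
  induction k with
  | zero =>
    rw [LieIdeal.map_lowerCentralSeries_succ, LieIdeal.map_lowerCentralSeries_zero]
    refine le_antisymm
      (map₂_le.mpr fun _ hx _ hy => hB.lie_mem_tailSpan_three_of_mem_ideal hx hy) ?_
    rw [← hB.map₂_ad_tailSpan (hB.add_smul_mem_ideal b) (m := 2) one_le_two]
    exact map₂_le_map₂_right (hB.tailSpan_two_le_ideal b)
  | succ k ih =>
    rw [LieIdeal.map_lowerCentralSeries_succ, ih,
      hB.map₂_ad_tailSpan (hB.add_smul_mem_ideal b) (by omega)]

theorem finrank_lowerCentralSeries_ideal (b : K) (k : ℕ) :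
    finrank K (LieModule.lowerCentralSeries K (hB.ideal b) (hB.ideal b) (k + 1)) =
      n - 1 - k := by
  calc finrank K (LieModule.lowerCentralSeries K (hB.ideal b) (hB.ideal b) (k + 1))
      _ = finrank K (B.tailSpan (k + 3)) := by
        rw [← hB.map_lowerCentralSeries_ideal b k]
        exact (equivMapOfInjective _ (hB.ideal b).incl_injective _).finrank_eq
      _ = n - 1 - k := by rw [B.finrank_tailSpan]; omega

end IsFiliformBasis

end Filiform

theorem f13SC_eq_zero_of_lt {i j k : ℕ} (h : k < i + j + 1) : f13SC i j k = 0 := by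
  unfold f13SC
  split <;> first | rfl | (rw [if_neg]; omega) | omega

theorem f13SC_zero_right (i k : ℕ) : f13SC i 0 k = 0 := by
  unfold f13SC
  split <;> first | rfl | omega

theorem f13C_eq_zero_of_lt {i j k : Fin 13} (h : (k : ℕ) < i + j + 1) : f13C i j k = 0 := by
  rw [f13C, f13SC_eq_zero_of_lt h, f13SC_eq_zero_of_lt (by omega), sub_zero]

theorem f13C_zero_left (j k : Fin 13) :
    f13C 0 j k = if 1 ≤ (j : ℕ) ∧ (j : ℕ) ≤ 11 ∧ (k : ℕ) = j + 1 then 1 else 0 := by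
  rw [f13C, Fin.val_zero, f13SC_zero_right, sub_zero, f13SC]

theorem isFiliformBasis_f13 {L : Type*} [LieRing L] [LieAlgebra ℂ L]
    {B : Basis (Fin 13) ℂ L} (hB : ∀ i j : Fin 13, ⁅B i, B j⁆ = ∑ k : Fin 13, f13C i j k • B k) :
    IsFiliformBasis (n := 11) B where
  lie_mem_tailSpan i j := hB i j ▸ B.sum_smul_mem_tailSpan fun _ hk => f13C_eq_zero_of_lt hk
  lie_zero_castSucc j hj := by
    rw [hB, Finset.sum_eq_single j.succ]
    · rw [f13C_zero_left, if_pos (by simp; omega), one_smul]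
    · intro k _ hk
      rw [f13C_zero_left, if_neg, zero_smul]
      exact fun h => hk (Fin.ext (by simp [h.2.2]))
    · simp

/-- For every `b ∈ ℂ`, the subspace `h_b = ⟨e_0 + b e_1, e_2, …, e_12⟩` of `f₁₃` is an
ideal of codimension 1, and it is filiform: the terms of its lower central series satisfy
`dim h_b^i = 11 - i` for `1 ≤ i ≤ 11`. -/
theorem f13_hb_ideal_filiform
    (L : Type*) [LieRing L] [LieAlgebra ℂ L]
    (B : Module.Basis (Fin 13) ℂ L)
    (hB : ∀ i j : Fin 13, ⁅B i, B j⁆ = ∑ k : Fin 13, f13C i j k • B k)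
    (b : ℂ) :
    ∃ I : LieIdeal ℂ L,
      (I : Submodule ℂ L)
        = Submodule.span ℂ ({B 0 + b • B 1} ∪ B '' {j : Fin 13 | 2 ≤ (j : ℕ)}) ∧
      Module.finrank ℂ I = 12 ∧
      ∀ i : ℕ, 1 ≤ i → i ≤ 11 →
        Module.finrank ℂ (LieModule.lowerCentralSeries ℂ I I i) = 11 - i := by
  have hF := isFiliformBasis_f13 hB
  refine ⟨hF.ideal b, rfl, B.finrank_span_add_smul_union b, fun i hi hi' => ?_⟩
  obtain ⟨k, rfl⟩ : ∃ k, i = k + 1 := ⟨i - 1, by omega⟩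
  rw [hF.finrank_lowerCentralSeries_ideal]
  omega
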